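/- Let λ > 0 and let u ∈ H¹(S¹) be positive. Then the transformed function T_λu satisfies the two invariance identities: ∫₀^{2π} ( (T_λu)'(θ)² − (T_λu)(θ)² ) dθ = ∫₀^{2π} ( u'(θ)² − u(θ)² ) dθ and ∫₀^{2π} (T_λu)(θ)^{-2} dθ = ∫₀^{2π} u(θ)^{-2} dθ. -/

import Mathlib

open Real MeasureTheory Set

/-- `u ∈ H¹(S¹)`: `u` is a `2π`-periodic real function on `ℝ` which is absolutely
continuous with (weak) derivative `u'`, and both `u` and `u'` are square-integrable
over a period. -/
def MemH1Circle (u u' : ℝ → ℝ) : Prop :=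
  Function.Periodic u (2 * π) ∧ Function.Periodic u' (2 * π) ∧
  (∀ x : ℝ, u x = u 0 + ∫ t in (0:ℝ)..x, u' t) ∧
  IntervalIntegrable u' volume 0 (2 * π) ∧
  MemLp u 2 (volume.restrict (Icc 0 (2 * π))) ∧
  MemLp u' 2 (volume.restrict (Icc 0 (2 * π)))

/-- `ψ_λ(θ) = √(λ²cos²θ + λ⁻²sin²θ)`. -/
noncomputable def psiL (l : ℝ) : ℝ → ℝ :=
  fun θ => Real.sqrt (l ^ 2 * Real.cos θ ^ 2 + l ^ (-2 : ℤ) * Real.sin θ ^ 2)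

/-- `σ_λ(θ) = ∫₀^θ ψ_λ(t)⁻² dt`. -/
noncomputable def sigmaL (l : ℝ) : ℝ → ℝ :=
  fun θ => ∫ t in (0:ℝ)..θ, (psiL l t) ^ (-2 : ℤ)

/-- `(T_λ u)(θ) = u(σ_λ(θ))·ψ_λ(θ)`. -/
noncomputable def TL (l : ℝ) (u : ℝ → ℝ) : ℝ → ℝ :=
  fun θ => u (sigmaL l θ) * psiL l θ

/-- The (weak) derivative of `T_λ u`, computed by the chain rule:
`(T_λ u)' = u'(σ_λ)·ψ_λ⁻¹ + u(σ_λ)·ψ_λ'` (since `σ_λ' = ψ_λ⁻²`). -/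
noncomputable def TLder (l : ℝ) (u u' : ℝ → ℝ) : ℝ → ℝ :=
  fun θ => u' (sigmaL l θ) * (psiL l θ)⁻¹ + u (sigmaL l θ) * deriv (psiL l) θ

noncomputable def Qf (l : ℝ) : ℝ → ℝ :=
  fun θ => l ^ 2 * Real.cos θ ^ 2 + l ^ (-2 : ℤ) * Real.sin θ ^ 2

noncomputable def Qd (l : ℝ) : ℝ → ℝ :=
  fun θ => 2 * Real.sin θ * Real.cos θ * (l ^ (-2 : ℤ) - l ^ 2)

noncomputable def Qdd (l : ℝ) : ℝ → ℝ :=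
  fun θ => 2 * (Real.cos θ ^ 2 - Real.sin θ ^ 2) * (l ^ (-2 : ℤ) - l ^ 2)

variable {l : ℝ}

lemma l_zpow_neg_two (hl : 0 < l) : l ^ (-2 : ℤ) = (l ^ 2)⁻¹ := by
  rw [zpow_neg, zpow_two, sq]

lemma Qf_pos (hl : 0 < l) (θ : ℝ) : 0 < Qf l θ := by
  have h := sin_sq_add_cos_sq θ
  have h2 : (0:ℝ) < l ^ 2 := by positivity
  have h3 : (0:ℝ) < l ^ (-2 : ℤ) := by rw [l_zpow_neg_two hl]; positivity
  unfold Qf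
  rcases lt_or_ge 0 (Real.cos θ ^ 2) with hc | hc
  · have := mul_nonneg h3.le (sq_nonneg (Real.sin θ))
    nlinarith
  · have hc' : Real.cos θ ^ 2 = 0 := le_antisymm hc (sq_nonneg _)
    have hs : Real.sin θ ^ 2 = 1 := by nlinarith
    rw [hc', hs]; nlinarith

lemma psiL_eq (θ : ℝ) : psiL l θ = Real.sqrt (Qf l θ) := rfl

lemma psiL_pos (hl : 0 < l) (θ : ℝ) : 0 < psiL l θ :=
  Real.sqrt_pos.mpr (Qf_pos hl θ)

lemma psiL_sq (hl : 0 < l) (θ : ℝ) : psiL l θ ^ 2 = Qf l θ := by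
  rw [psiL_eq]; exact Real.sq_sqrt (Qf_pos hl θ).le

lemma psiL_zpow_neg_two (hl : 0 < l) (θ : ℝ) : psiL l θ ^ (-2 : ℤ) = (Qf l θ)⁻¹ := by
  rw [zpow_neg, zpow_two, ← sq, psiL_sq hl θ]

lemma hasDerivAt_Qf (θ : ℝ) : HasDerivAt (Qf l) (Qd l θ) θ := by
  have h1 := (((Real.hasDerivAt_cos θ).pow 2).const_mul (l ^ 2)).add
      (((Real.hasDerivAt_sin θ).pow 2).const_mul (l ^ (-2 : ℤ)))
  refine h1.congr_deriv ?_
  unfold Qd; push_cast; ring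

lemma hasDerivAt_Qd (θ : ℝ) : HasDerivAt (Qd l) (Qdd l θ) θ := by
  have h1 := (((Real.hasDerivAt_sin θ).const_mul 2).mul (Real.hasDerivAt_cos θ)).mul_const
      (l ^ (-2 : ℤ) - l ^ 2)
  refine h1.congr_deriv ?_
  unfold Qdd; push_cast; ring

lemma continuous_Qf : Continuous (Qf l) := by
  unfold Qf; fun_prop

lemma continuous_Qd : Continuous (Qd l) := by
  unfold Qd; fun_prop

lemma continuous_Qdd : Continuous (Qdd l) := by
  unfold Qdd; fun_prop

lemma hasDerivAt_psiL (hl : 0 < l) (θ : ℝ) :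
    HasDerivAt (psiL l) (Qd l θ / (2 * psiL l θ)) θ := by
  exact (hasDerivAt_Qf (l := l) θ).sqrt (ne_of_gt (Qf_pos hl θ))

lemma deriv_psiL (hl : 0 < l) (θ : ℝ) :
    deriv (psiL l) θ = Qd l θ / (2 * psiL l θ) :=
  (hasDerivAt_psiL hl θ).deriv

/-- The key ODE-type identity `Q'² + 4 = 4Q² + 2QQ''`. -/
lemma Qf_key (hl : 0 < l) (θ : ℝ) :
    Qd l θ ^ 2 + 4 = 4 * Qf l θ ^ 2 + 2 * Qf l θ * Qdd l θ := by
  have h := sin_sq_add_cos_sq θ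
  have hab : l ^ 2 * l ^ (-2 : ℤ) = 1 := by
    rw [l_zpow_neg_two hl]; field_simp
  unfold Qd Qf Qdd
  linear_combination (-(4:ℝ) * (l ^ 2 * l ^ (-2 : ℤ)) * (Real.sin θ ^ 2 + Real.cos θ ^ 2 + 1)) * h
    + (-4 : ℝ) * hab

noncomputable def Gf (l : ℝ) : ℝ → ℝ :=
  fun θ => θ + Real.arctan ((l ^ (-2 : ℤ) - 1) * Real.sin θ * Real.cos θ /
    (Real.cos θ ^ 2 + l ^ (-2 : ℤ) * Real.sin θ ^ 2))

lemma Df_pos (hl : 0 < l) (θ : ℝ) :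
    0 < Real.cos θ ^ 2 + l ^ (-2 : ℤ) * Real.sin θ ^ 2 := by
  have h := sin_sq_add_cos_sq θ
  have h3 : (0:ℝ) < l ^ (-2 : ℤ) := by rw [l_zpow_neg_two hl]; positivity
  rcases lt_or_ge 0 (Real.cos θ ^ 2) with hc | hc
  · have := mul_nonneg h3.le (sq_nonneg (Real.sin θ))
    nlinarith
  · have hc' : Real.cos θ ^ 2 = 0 := le_antisymm hc (sq_nonneg _)
    have hs : Real.sin θ ^ 2 = 1 := by nlinarith
    rw [hc', hs]; nlinarith

lemma alg (a b s c : ℝ) (h : s^2+c^2=1) (hab : a*b=1)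
    (hD0 : c^2 + b*s^2 ≠ 0) (hQ0 : a*c^2+b*s^2 ≠ 0)
    (h10 : 1 + ((b-1)*s*c/(c^2 + b*s^2))^2 ≠ 0) :
    (a*c^2+b*s^2)⁻¹ = 1 + 1/(1+((b-1)*s*c/(c^2 + b*s^2))^2) *
      ((((b-1)*c*c + (b-1)*s*(-s))*(c^2 + b*s^2) -
        (b-1)*s*c*(2*c^1*(-s) + b*(2*s^1*c)))/(c^2 + b*s^2)^2) := by
  have hb : b ≠ 0 := by rintro rfl; simp at hab
  have hD2 : (c^2 + b*s^2)^2 + ((b-1)*s*c)^2 = b*(a*c^2+b*s^2) := by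
    linear_combination (c^2+b^2*s^2) * h - c^2 * hab
  have hX : ((b-1)*c*c + (b-1)*s*(-s))*(c^2 + b*s^2) - (b-1)*s*c*(2*c^1*(-s) + b*(2*s^1*c))
      = b - b*(a*c^2+b*s^2) := by
    linear_combination (b + (b-1)*(c^2-b*s^2)) * h + c^2 * hab
  rw [hX]
  set D := c^2 + b*s^2 with hDdef
  set Q := a*c^2+b*s^2 with hQdef
  set N := (b-1)*s*c with hNdef
  have h1 : 1 + (N/D)^2 = b*Q/D^2 := by
    rw [eq_div_iff (pow_ne_zero 2 hD0), ← hD2, add_mul, div_pow,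
      div_mul_cancel₀ _ (pow_ne_zero 2 hD0)]
    ring
  rw [h1, one_div_div, div_mul_div_comm, mul_comm (D^2), mul_div_mul_right _ _ (pow_ne_zero 2 hD0),
    sub_div, div_self (mul_ne_zero hb hQ0), div_mul_cancel_left₀ hb]
  ring

lemma hasDerivAt_Gf (hl : 0 < l) (θ : ℝ) : HasDerivAt (Gf l) ((Qf l θ)⁻¹) θ := by
  have h := sin_sq_add_cos_sq θ
  set b : ℝ := l ^ (-2 : ℤ) with hbdef
  have hb : (0:ℝ) < b := by rw [hbdef, l_zpow_neg_two hl]; positivity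
  have hD : (0:ℝ) < Real.cos θ ^ 2 + b * Real.sin θ ^ 2 := Df_pos hl θ
  have hN : HasDerivAt (fun θ : ℝ => (b - 1) * Real.sin θ * Real.cos θ)
      ((b - 1) * Real.cos θ * Real.cos θ + (b - 1) * Real.sin θ * (-Real.sin θ)) θ :=
    (((Real.hasDerivAt_sin θ).const_mul (b - 1)).mul (Real.hasDerivAt_cos θ))
  have hDd : HasDerivAt (fun θ : ℝ => Real.cos θ ^ 2 + b * Real.sin θ ^ 2)
      (2 * Real.cos θ ^ 1 * (-Real.sin θ) + b * (2 * Real.sin θ ^ 1 * Real.cos θ)) θ := by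
    have h2 := ((Real.hasDerivAt_cos θ).pow 2).add (((Real.hasDerivAt_sin θ).pow 2).const_mul b)
    exact h2.congr_deriv (by norm_num)
  have hq := hN.div hDd (ne_of_gt hD)
  have ha := (Real.hasDerivAt_arctan (((b - 1) * Real.sin θ * Real.cos θ) /
      (Real.cos θ ^ 2 + b * Real.sin θ ^ 2))).comp θ hq
  have hG := (hasDerivAt_id θ).add ha
  refine hG.congr_deriv ?_
  have hQ : (0:ℝ) < l ^ 2 * Real.cos θ ^ 2 + b * Real.sin θ ^ 2 := Qf_pos hl θ
  have hab : l ^ 2 * b = 1 := by rw [hbdef, l_zpow_neg_two hl]; field_simp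
  have h10 : 1 + ((b - 1) * Real.sin θ * Real.cos θ /
      (Real.cos θ ^ 2 + b * Real.sin θ ^ 2)) ^ 2 ≠ 0 := by positivity
  unfold Qf
  rw [← hbdef]
  exact (alg (l ^ 2) b (Real.sin θ) (Real.cos θ) h hab (ne_of_gt hD) (ne_of_gt hQ) h10).symm

lemma continuous_Qf_inv (hl : 0 < l) : Continuous (fun θ => (Qf l θ)⁻¹) :=
  continuous_Qf.inv₀ (fun θ => ne_of_gt (Qf_pos hl θ))

lemma sigmaL_eq_Gf (hl : 0 < l) (θ : ℝ) : sigmaL l θ = Gf l θ := by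
  unfold sigmaL
  have h1 : ∀ t : ℝ, (psiL l t) ^ (-2 : ℤ) = (Qf l t)⁻¹ := psiL_zpow_neg_two hl
  simp only [h1]
  have h2 : ∫ t in (0:ℝ)..θ, (Qf l t)⁻¹ = Gf l θ - Gf l 0 :=
    intervalIntegral.integral_eq_sub_of_hasDerivAt (fun t _ => hasDerivAt_Gf hl t)
      ((continuous_Qf_inv hl).intervalIntegrable 0 θ)
  rw [h2]
  simp [Gf]

lemma hasDerivAt_sigmaL (hl : 0 < l) (θ : ℝ) :
    HasDerivAt (sigmaL l) ((Qf l θ)⁻¹) θ := by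
  have : sigmaL l = Gf l := funext (sigmaL_eq_Gf hl)
  rw [this]
  exact hasDerivAt_Gf hl θ

lemma sigmaL_zero : sigmaL l 0 = 0 := by
  unfold sigmaL
  simp

lemma sigmaL_two_pi (hl : 0 < l) : sigmaL l (2 * π) = 2 * π := by
  rw [sigmaL_eq_Gf hl]
  unfold Gf
  rw [Real.sin_two_pi]
  simp

lemma sigmaL_strictMono (hl : 0 < l) : StrictMono (sigmaL l) := by
  apply strictMono_of_deriv_pos
  intro x
  rw [(hasDerivAt_sigmaL hl x).deriv]
  exact inv_pos.mpr (Qf_pos hl x)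

lemma continuous_sigmaL (hl : 0 < l) : Continuous (sigmaL l) := by
  have h : Differentiable ℝ (sigmaL l) := fun x => (hasDerivAt_sigmaL hl x).differentiableAt
  exact h.continuous

lemma sigmaL_image_Icc (hl : 0 < l) {x y : ℝ} (hxy : x ≤ y) :
    sigmaL l '' Icc x y = Icc (sigmaL l x) (sigmaL l y) := by
  apply Subset.antisymm
  · rintro _ ⟨t, ht, rfl⟩
    exact ⟨(sigmaL_strictMono hl).monotone ht.1, (sigmaL_strictMono hl).monotone ht.2⟩
  · exact intermediate_value_Icc hxy (continuous_sigmaL hl).continuousOn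

lemma sigmaL_mem_Icc (hl : 0 < l) {x : ℝ} (hx : x ∈ Icc 0 (2 * π)) :
    sigmaL l x ∈ Icc 0 (2 * π) := by
  constructor
  · rw [← sigmaL_zero (l := l)]
    exact (sigmaL_strictMono hl).monotone hx.1
  · rw [← sigmaL_two_pi hl]
    exact (sigmaL_strictMono hl).monotone hx.2

lemma ii_eq_icc {a b : ℝ} (hab : a ≤ b) (f : ℝ → ℝ) :
    ∫ x in a..b, f x = ∫ x in Icc a b, f x := by
  rw [intervalIntegral.integral_of_le hab, MeasureTheory.integral_Icc_eq_integral_Ioc]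

/-- Fubini on the triangle. -/
lemma fubini_triangle {T : ℝ} (hT : 0 ≤ T) {F G : ℝ → ℝ}
    (hF : IntegrableOn F (Icc 0 T)) (hG : IntegrableOn G (Icc 0 T)) :
    ∫ s in Icc (0:ℝ) T, F s * (∫ t in Icc s T, G t) =
      ∫ t in Icc (0:ℝ) T, G t * (∫ s in Icc 0 t, F s) := by
  set μ := volume.restrict (Icc (0:ℝ) T) with hμ
  have hFG : Integrable (fun p : ℝ × ℝ => F p.1 * G p.2) (μ.prod μ) := hF.mul_prod hG
  have hmeas : MeasurableSet {p : ℝ × ℝ | p.1 ≤ p.2} := measurableSet_le measurable_fst measurable_snd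
  have hΦ : Integrable ({p : ℝ × ℝ | p.1 ≤ p.2}.indicator (fun p => F p.1 * G p.2)) (μ.prod μ) :=
    hFG.indicator hmeas
  have hswap := MeasureTheory.integral_integral_swap
    (f := fun s t => ({p : ℝ × ℝ | p.1 ≤ p.2}.indicator (fun p => F p.1 * G p.2)) (s, t))
    (μ := μ) (ν := μ) hΦ
  have hleft : (∫ s, ∫ t, ({p : ℝ × ℝ | p.1 ≤ p.2}.indicator (fun p => F p.1 * G p.2)) (s, t) ∂μ ∂μ)
      = ∫ s in Icc (0:ℝ) T, F s * (∫ t in Icc s T, G t) := by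
    rw [hμ]
    apply setIntegral_congr_fun measurableSet_Icc
    intro s hs
    have h1 : (fun t => ({p : ℝ × ℝ | p.1 ≤ p.2}.indicator (fun p => F p.1 * G p.2)) (s, t))
        = (Ici s).indicator (fun t => F s * G t) := by
      funext t
      by_cases h : s ≤ t
      · rw [Set.indicator_of_mem (by exact h : (s,t) ∈ {p : ℝ × ℝ | p.1 ≤ p.2}),
          Set.indicator_of_mem (by exact h)]
      · rw [Set.indicator_of_notMem (by exact h), Set.indicator_of_notMem (by exact h)]
    dsimp only
    rw [h1, MeasureTheory.integral_indicator measurableSet_Ici,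
      MeasureTheory.Measure.restrict_restrict measurableSet_Ici]
    have h2 : Ici s ∩ Icc 0 T = Icc s T := by
      ext x
      simp only [mem_inter_iff, mem_Ici, mem_Icc]
      constructor
      · rintro ⟨h3, _, h5⟩; exact ⟨h3, h5⟩
      · rintro ⟨h3, h4⟩; exact ⟨h3, hs.1.trans h3, h4⟩
    rw [h2, MeasureTheory.integral_const_mul]
  have hright : (∫ t, ∫ s, ({p : ℝ × ℝ | p.1 ≤ p.2}.indicator (fun p => F p.1 * G p.2)) (s, t) ∂μ ∂μ)
      = ∫ t in Icc (0:ℝ) T, G t * (∫ s in Icc 0 t, F s) := by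
    rw [hμ]
    apply setIntegral_congr_fun measurableSet_Icc
    intro t ht
    have h1 : (fun s => ({p : ℝ × ℝ | p.1 ≤ p.2}.indicator (fun p => F p.1 * G p.2)) (s, t))
        = (Iic t).indicator (fun s => F s * G t) := by
      funext s
      by_cases h : s ≤ t
      · rw [Set.indicator_of_mem (by exact h : (s,t) ∈ {p : ℝ × ℝ | p.1 ≤ p.2}),
          Set.indicator_of_mem (by exact h)]
      · rw [Set.indicator_of_notMem (by exact h), Set.indicator_of_notMem (by exact h)]
    dsimp only
    rw [h1, MeasureTheory.integral_indicator measurableSet_Iic,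
      MeasureTheory.Measure.restrict_restrict measurableSet_Iic]
    have h2 : Iic t ∩ Icc 0 T = Icc 0 t := by
      ext x
      simp only [mem_inter_iff, mem_Iic, mem_Icc]
      constructor
      · rintro ⟨h3, h4, _⟩; exact ⟨h4, h3⟩
      · rintro ⟨h3, h4⟩; exact ⟨h4, h3, h4.trans ht.2⟩
    rw [h2]
    have h3 : ∫ s in Icc (0:ℝ) t, F s * G t = G t * ∫ s in Icc (0:ℝ) t, F s := by
      rw [MeasureTheory.integral_mul_const]; ring
    exact h3
  rw [← hleft, ← hright]
  exact hswap

/-- Integration by parts against a primitive. -/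
lemma ibp_primitive {T : ℝ} (hT : 0 ≤ T) {F g g' : ℝ → ℝ}
    (hF : IntegrableOn F (Icc 0 T)) (hg : ∀ x, HasDerivAt g (g' x) x)
    (hg' : Continuous g') (hgT : g T = 0) :
    ∫ s in Icc (0:ℝ) T, F s * g s = - ∫ t in Icc (0:ℝ) T, g' t * (∫ s in Icc 0 t, F s) := by
  have h1 : ∀ s ∈ Icc (0:ℝ) T, g s = - ∫ t in Icc s T, g' t := by
    intro s hs
    have h2 : ∫ t in s..T, g' t = g T - g s :=
      intervalIntegral.integral_eq_sub_of_hasDerivAt (fun t _ => hg t)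
        (hg'.intervalIntegrable s T)
    rw [ii_eq_icc hs.2] at h2
    rw [h2, hgT]; ring
  have h3 : ∫ s in Icc (0:ℝ) T, F s * g s
      = ∫ s in Icc (0:ℝ) T, -(F s * ∫ t in Icc s T, g' t) := by
    apply setIntegral_congr_fun measurableSet_Icc
    intro s hs
    dsimp only
    rw [h1 s hs]; ring
  rw [h3, MeasureTheory.integral_neg, neg_inj]
  exact fubini_triangle hT hF (hg'.integrableOn_Icc)

lemma integrableOn_mul_left_of_continuousOn {s : Set ℝ} (hs : MeasurableSet s)
    (hcomp : IsCompact s) {F φ : ℝ → ℝ} (hF : IntegrableOn F s)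
    (hφ : ContinuousOn φ s) : IntegrableOn (fun x => φ x * F x) s := by
  obtain ⟨C, hC⟩ := hcomp.exists_bound_of_continuousOn hφ
  exact Integrable.bdd_mul hF (hφ.aestronglyMeasurable hs)
    ((ae_restrict_mem hs).mono (fun x hx => hC x hx))

lemma icc_integral_split {s t : ℝ} (hs0 : 0 ≤ s) (hst : s ≤ t) {F : ℝ → ℝ}
    (hF : IntegrableOn F (Icc 0 t)) :
    ∫ r in Icc (0:ℝ) t, F r = (∫ r in Icc (0:ℝ) s, F r) + ∫ r in Icc s t, F r := by
  have h1 : IntervalIntegrable F volume 0 s :=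
    (intervalIntegrable_iff_integrableOn_Ioc_of_le hs0).mpr
      (hF.mono_set (fun x hx => ⟨hx.1.le, hx.2.trans hst⟩))
  have h2 : IntervalIntegrable F volume s t :=
    (intervalIntegrable_iff_integrableOn_Ioc_of_le hst).mpr
      (hF.mono_set (fun x hx => ⟨hs0.trans hx.1.le, hx.2⟩))
  rw [← ii_eq_icc hs0, ← ii_eq_icc hst, ← ii_eq_icc (hs0.trans hst)]
  rw [intervalIntegral.integral_add_adjacent_intervals h1 h2]

lemma continuousOn_icc_primitive {t : ℝ} {F : ℝ → ℝ} (hF : IntegrableOn F (Icc 0 t)) :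
    ContinuousOn (fun s => ∫ r in Icc (0:ℝ) s, F r) (Icc 0 t) :=
  intervalIntegral.continuousOn_primitive_Icc hF

/-- `(∫₀ᵗ F)² = 2∫₀ᵗ F·(∫₀ˢ F)`. -/
lemma sq_primitive {t : ℝ} (ht : 0 ≤ t) {F : ℝ → ℝ} (hF : IntegrableOn F (Icc 0 t)) :
    (∫ s in Icc (0:ℝ) t, F s)^2
      = 2 * ∫ s in Icc (0:ℝ) t, F s * (∫ r in Icc (0:ℝ) s, F r) := by
  have hfub := fubini_triangle ht hF hF
  set H : ℝ → ℝ := fun s => ∫ r in Icc (0:ℝ) s, F r with hH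
  have hHcont : ContinuousOn H (Icc 0 t) := continuousOn_icc_primitive hF
  have hFH : IntegrableOn (fun s => H s * F s) (Icc 0 t) :=
    integrableOn_mul_left_of_continuousOn measurableSet_Icc isCompact_Icc hF hHcont
  have hsplit : ∀ s ∈ Icc (0:ℝ) t, F s * (∫ r in Icc s t, F r) = F s * H t - F s * H s := by
    intro s hs
    have := icc_integral_split hs.1 hs.2 hF
    rw [hH]
    dsimp only
    rw [this]; ring
  have hint1 : ∫ s in Icc (0:ℝ) t, F s * (∫ r in Icc s t, F r)
      = ∫ s in Icc (0:ℝ) t, (F s * H t - F s * H s) :=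
    setIntegral_congr_fun measurableSet_Icc hsplit
  have hFHt : IntegrableOn (fun s => F s * H t) (Icc 0 t) := hF.mul_const (H t)
  have hFH' : IntegrableOn (fun s => F s * H s) (Icc 0 t) := by
    have : (fun s => F s * H s) = fun s => H s * F s := by funext s; ring
    rw [this]; exact hFH
  rw [hint1, MeasureTheory.integral_sub hFHt hFH'] at hfub
  rw [MeasureTheory.integral_mul_const] at hfub
  -- hfub : H t * H t - ∫ F H = ∫ F * H  (note RHS of fubini has F r * ∫ Icc 0 r F = F r * H r)
  have hrhs : ∫ r in Icc (0:ℝ) t, F r * (∫ s in Icc (0:ℝ) r, F s) = ∫ r in Icc (0:ℝ) t, F r * H r := rfl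
  rw [hrhs] at hfub
  have : H t ^ 2 = 2 * ∫ s in Icc (0:ℝ) t, F s * H s := by nlinarith [hfub]
  exact this

lemma subst_icc (hl : 0 < l) (f : ℝ → ℝ) {x : ℝ} (hx : 0 ≤ x) :
    ∫ θ in Icc (0:ℝ) x, f (sigmaL l θ) * (Qf l θ)⁻¹ = ∫ t in Icc (0:ℝ) (sigmaL l x), f t := by
  have himg : sigmaL l '' Icc 0 x = Icc 0 (sigmaL l x) := by
    rw [sigmaL_image_Icc hl hx, sigmaL_zero]
  have h := MeasureTheory.integral_image_eq_integral_abs_deriv_smul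
    (measurableSet_Icc : MeasurableSet (Icc (0:ℝ) x))
    (fun t _ => (hasDerivAt_sigmaL hl t).hasDerivWithinAt)
    ((sigmaL_strictMono hl).injective.injOn) f
  rw [himg] at h
  rw [h]
  apply setIntegral_congr_fun measurableSet_Icc
  intro θ _
  dsimp only
  rw [abs_of_pos (inv_pos.mpr (Qf_pos hl θ)), smul_eq_mul]; ring

lemma subst_integrableOn (hl : 0 < l) {f : ℝ → ℝ} {x : ℝ} (hx : 0 ≤ x)
    (hf : IntegrableOn f (Icc 0 (sigmaL l x))) :
    IntegrableOn (fun θ => f (sigmaL l θ) * (Qf l θ)⁻¹) (Icc 0 x) := by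
  have himg : sigmaL l '' Icc 0 x = Icc 0 (sigmaL l x) := by
    rw [sigmaL_image_Icc hl hx, sigmaL_zero]
  have h := (MeasureTheory.integrableOn_image_iff_integrableOn_abs_deriv_smul
    (measurableSet_Icc : MeasurableSet (Icc (0:ℝ) x))
    (fun t _ => (hasDerivAt_sigmaL hl t).hasDerivWithinAt)
    ((sigmaL_strictMono hl).injective.injOn) f).mp (by rw [himg]; exact hf)
  have heq : (fun θ => f (sigmaL l θ) * (Qf l θ)⁻¹)
      = fun θ => |(Qf l θ)⁻¹| • f (sigmaL l θ) := by
    funext θ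
    rw [abs_of_pos (inv_pos.mpr (Qf_pos hl θ)), smul_eq_mul]; ring
  rw [heq]
  exact h

lemma Qd_zero : Qd l 0 = 0 := by simp [Qd]

lemma Qd_two_pi : Qd l (2 * π) = 0 := by simp [Qd, Real.sin_two_pi]

lemma point1 (A B p Q qd : ℝ) (hp : p ≠ 0) (hQ0 : Q ≠ 0) (hp2 : p ^ 2 = Q) :
    (A * p⁻¹ + B * (qd / (2 * p))) ^ 2 - (B * p) ^ 2
      = A ^ 2 * Q⁻¹ + (2 * B * (A * Q⁻¹)) * (qd / 2) + B ^ 2 * (qd ^ 2 / (4 * Q) - Q) := by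
  subst hp2
  field_simp
  ring

lemma point2 (hl : 0 < l) (θ : ℝ) :
    Qd l θ ^ 2 / (4 * Qf l θ) - Qf l θ - Qdd l θ / 2 = -(Qf l θ)⁻¹ := by
  have hk := Qf_key hl θ
  have hQ := Qf_pos hl θ
  apply mul_left_cancel₀ (mul_ne_zero (four_ne_zero (α := ℝ)) hQ.ne')
  linear_combination (Qd l θ ^ 2 + 4) * (mul_inv_cancel₀ hQ.ne') + hk

set_option maxHeartbeats 1000000 in
/-- The conformal invariance identities (4.2)–(4.3) of the paper for `T_λ`. -/
theorem TL_invariance (l : ℝ) (hl : 0 < l)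
    (u u' : ℝ → ℝ) (hu : MemH1Circle u u') (hupos : ∀ θ, 0 < u θ) :
    ((∫ θ in (0:ℝ)..(2 * π), ((TLder l u u' θ) ^ 2 - (TL l u θ) ^ 2)) =
      ∫ θ in (0:ℝ)..(2 * π), ((u' θ) ^ 2 - (u θ) ^ 2)) ∧
    ((∫ θ in (0:ℝ)..(2 * π), (TL l u θ) ^ (-2 : ℤ)) =
      ∫ θ in (0:ℝ)..(2 * π), (u θ) ^ (-2 : ℤ)) := by
  obtain ⟨hper, hper', hrep, hint, huL2, hu'L2⟩ := hu
  have hT : (0:ℝ) ≤ 2 * π := by positivity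
  have hσT : sigmaL l (2 * π) = 2 * π := sigmaL_two_pi hl
  have hu'Icc : IntegrableOn u' (Icc 0 (2 * π)) :=
    (integrableOn_Icc_iff_integrableOn_Ioc (f := u') (a := 0) (b := 2 * π)).mpr hint.1
  have hucont : ContinuousOn u (Icc 0 (2 * π)) := by
    have hfun : u = fun x => u 0 + ∫ t in (0:ℝ)..x, u' t := funext hrep
    rw [hfun]
    apply ContinuousOn.add continuousOn_const
    have h1 : IntegrableOn u' (uIcc (0:ℝ) (2 * π)) := by rwa [uIcc_of_le hT]
    have h2 := intervalIntegral.continuousOn_primitive_interval (μ := volume) h1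
    rwa [uIcc_of_le hT] at h2
  have hvcont : ContinuousOn (fun θ => u (sigmaL l θ)) (Icc 0 (2 * π)) :=
    hucont.comp (continuous_sigmaL hl).continuousOn (fun θ hθ => sigmaL_mem_Icc hl hθ)
  have hV'int : IntegrableOn (fun θ => u' (sigmaL l θ) * (Qf l θ)⁻¹) (Icc 0 (2 * π)) :=
    subst_integrableOn hl hT (by rw [hσT]; exact hu'Icc)
  have hrep_v : ∀ t ∈ Icc (0:ℝ) (2 * π), u (sigmaL l t)
      = u 0 + ∫ s in Icc (0:ℝ) t, u' (sigmaL l s) * (Qf l s)⁻¹ := by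
    intro t ht
    have hσt0 : 0 ≤ sigmaL l t := by
      rw [← sigmaL_zero (l := l)]
      exact (sigmaL_strictMono hl).monotone ht.1
    have h1 := hrep (sigmaL l t)
    rw [ii_eq_icc hσt0, ← subst_icc hl u' ht.1] at h1
    exact h1
  have hW : ∀ t ∈ Icc (0:ℝ) (2 * π),
      (∫ s in Icc (0:ℝ) t, 2 * u (sigmaL l s) * (u' (sigmaL l s) * (Qf l s)⁻¹))
        = u (sigmaL l t) ^ 2 - u 0 ^ 2 := by
    intro t ht
    have hV't : IntegrableOn (fun s => u' (sigmaL l s) * (Qf l s)⁻¹) (Icc 0 t) :=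
      hV'int.mono_set (Icc_subset_Icc le_rfl ht.2)
    have hHcont := continuousOn_icc_primitive hV't
    have hcong : ∀ s ∈ Icc (0:ℝ) t,
        2 * u (sigmaL l s) * (u' (sigmaL l s) * (Qf l s)⁻¹)
        = 2 * u 0 * (u' (sigmaL l s) * (Qf l s)⁻¹)
          + 2 * ((∫ r in Icc (0:ℝ) s, u' (sigmaL l r) * (Qf l r)⁻¹)
              * (u' (sigmaL l s) * (Qf l s)⁻¹)) := by
      intro s hs
      rw [hrep_v s ⟨hs.1, hs.2.trans ht.2⟩]; ring
    rw [setIntegral_congr_fun measurableSet_Icc hcong]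
    have h1 : IntegrableOn (fun s => 2 * u 0 * (u' (sigmaL l s) * (Qf l s)⁻¹)) (Icc 0 t) :=
      hV't.const_mul _
    have h2 : IntegrableOn (fun s => 2 * ((∫ r in Icc (0:ℝ) s, u' (sigmaL l r) * (Qf l r)⁻¹)
        * (u' (sigmaL l s) * (Qf l s)⁻¹))) (Icc 0 t) :=
      (integrableOn_mul_left_of_continuousOn measurableSet_Icc isCompact_Icc hV't hHcont).const_mul 2
    rw [MeasureTheory.integral_add h1 h2, MeasureTheory.integral_const_mul,
      MeasureTheory.integral_const_mul]
    have hsq := sq_primitive ht.1 hV't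
    have hflip : ∫ s in Icc (0:ℝ) t, (∫ r in Icc (0:ℝ) s, u' (sigmaL l r) * (Qf l r)⁻¹)
          * (u' (sigmaL l s) * (Qf l s)⁻¹)
        = ∫ s in Icc (0:ℝ) t, (u' (sigmaL l s) * (Qf l s)⁻¹)
          * (∫ r in Icc (0:ℝ) s, u' (sigmaL l r) * (Qf l r)⁻¹) := by
      apply setIntegral_congr_fun measurableSet_Icc
      intro s _
      dsimp only
      ring
    rw [hflip, hrep_v t ht]
    linear_combination -hsq
  have hpt1 : ∀ θ, TLder l u u' θ ^ 2 - TL l u θ ^ 2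
      = u' (sigmaL l θ) ^ 2 * (Qf l θ)⁻¹
        + (2 * u (sigmaL l θ) * (u' (sigmaL l θ) * (Qf l θ)⁻¹)) * (Qd l θ / 2)
        + u (sigmaL l θ) ^ 2 * (Qd l θ ^ 2 / (4 * Qf l θ) - Qf l θ) := by
    intro θ
    unfold TLder TL
    rw [deriv_psiL hl θ]
    exact point1 _ _ _ _ _ (ne_of_gt (psiL_pos hl θ)) (ne_of_gt (Qf_pos hl θ)) (psiL_sq hl θ)
  have hA : IntegrableOn (fun θ => u' (sigmaL l θ) ^ 2 * (Qf l θ)⁻¹) (Icc 0 (2 * π)) := by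
    have h0 : IntegrableOn (fun x => u' x ^ 2) (Icc 0 (sigmaL l (2 * π))) := by
      rw [hσT]; exact hu'L2.integrable_sq
    have hres := subst_integrableOn hl hT h0
    simpa using hres
  have hB : IntegrableOn (fun θ => (2 * u (sigmaL l θ) * (u' (sigmaL l θ) * (Qf l θ)⁻¹))
      * (Qd l θ / 2)) (Icc 0 (2 * π)) := by
    have heq : (fun θ => (2 * u (sigmaL l θ) * (u' (sigmaL l θ) * (Qf l θ)⁻¹)) * (Qd l θ / 2))
        = fun θ => (u (sigmaL l θ) * Qd l θ) * (u' (sigmaL l θ) * (Qf l θ)⁻¹) := by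
      funext θ; ring
    rw [heq]
    exact integrableOn_mul_left_of_continuousOn measurableSet_Icc isCompact_Icc hV'int
      (hvcont.mul continuous_Qd.continuousOn)
  have hC : IntegrableOn (fun θ => u (sigmaL l θ) ^ 2
      * (Qd l θ ^ 2 / (4 * Qf l θ) - Qf l θ)) (Icc 0 (2 * π)) := by
    apply ContinuousOn.integrableOn_Icc
    apply ContinuousOn.mul (hvcont.pow 2)
    apply ContinuousOn.sub _ continuous_Qf.continuousOn
    apply ContinuousOn.div ((continuous_Qd.continuousOn).pow 2)
      ((continuous_const.mul continuous_Qf).continuousOn)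
    intro θ _
    have := Qf_pos hl θ
    exact mul_ne_zero four_ne_zero (ne_of_gt this)
  have hAval : ∫ θ in Icc (0:ℝ) (2 * π), u' (sigmaL l θ) ^ 2 * (Qf l θ)⁻¹
      = ∫ x in Icc (0:ℝ) (2 * π), u' x ^ 2 := by
    have h0 := subst_icc hl (fun x => u' x ^ 2) hT
    rw [hσT] at h0
    simpa using h0
  have hgT : Qd l (2 * π) / 2 = 0 := by rw [Qd_two_pi]; norm_num
  have hFint : IntegrableOn (fun s => 2 * u (sigmaL l s) * (u' (sigmaL l s) * (Qf l s)⁻¹))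
      (Icc 0 (2 * π)) := by
    have heq : (fun s => 2 * u (sigmaL l s) * (u' (sigmaL l s) * (Qf l s)⁻¹))
        = fun s => (2 * u (sigmaL l s)) * (u' (sigmaL l s) * (Qf l s)⁻¹) := by
      funext s; ring
    rw [heq]
    exact integrableOn_mul_left_of_continuousOn measurableSet_Icc isCompact_Icc hV'int
      (continuousOn_const.mul hvcont)
  have hibp := ibp_primitive (g := fun θ => Qd l θ / 2) (g' := fun θ => Qdd l θ / 2) hT hFint
    (fun x => (hasDerivAt_Qd x).div_const 2) (continuous_Qdd.div_const 2) hgT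
  have hibp2 : ∫ s in Icc (0:ℝ) (2 * π), (2 * u (sigmaL l s) * (u' (sigmaL l s) * (Qf l s)⁻¹))
        * (Qd l s / 2)
      = - ∫ t in Icc (0:ℝ) (2 * π), Qdd l t / 2 * (u (sigmaL l t) ^ 2 - u 0 ^ 2) := by
    rw [hibp, neg_inj]
    apply setIntegral_congr_fun measurableSet_Icc
    intro t ht
    dsimp only
    rw [hW t ht]
  have hQddint : ∫ t in Icc (0:ℝ) (2 * π), Qdd l t / 2 = 0 := by
    have h0 := intervalIntegral.integral_eq_sub_of_hasDerivAt
      (f := fun θ => Qd l θ / 2) (f' := fun θ => Qdd l θ / 2)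
      (fun t _ => (hasDerivAt_Qd t).div_const 2)
      ((continuous_Qdd.div_const 2).intervalIntegrable 0 (2 * π))
    rw [ii_eq_icc hT] at h0
    rw [h0]
    rw [Qd_two_pi, Qd_zero]
    norm_num
  have hQddv : IntegrableOn (fun t => Qdd l t / 2 * u (sigmaL l t) ^ 2) (Icc 0 (2 * π)) := by
    apply ContinuousOn.integrableOn_Icc
    exact ((continuous_Qdd.div_const 2).continuousOn).mul (hvcont.pow 2)
  have hsplit2 : ∫ t in Icc (0:ℝ) (2 * π), Qdd l t / 2 * (u (sigmaL l t) ^ 2 - u 0 ^ 2)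
      = (∫ t in Icc (0:ℝ) (2 * π), Qdd l t / 2 * u (sigmaL l t) ^ 2)
        - u 0 ^ 2 * ∫ t in Icc (0:ℝ) (2 * π), Qdd l t / 2 := by
    have hcong : ∀ t ∈ Icc (0:ℝ) (2 * π), Qdd l t / 2 * (u (sigmaL l t) ^ 2 - u 0 ^ 2)
        = Qdd l t / 2 * u (sigmaL l t) ^ 2 - u 0 ^ 2 * (Qdd l t / 2) := by
      intro t _; ring
    rw [setIntegral_congr_fun measurableSet_Icc hcong,
      MeasureTheory.integral_sub hQddv (((continuous_Qdd.div_const 2).integrableOn_Icc).const_mul _),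
      MeasureTheory.integral_const_mul]
  have hBval : ∫ θ in Icc (0:ℝ) (2 * π), (2 * u (sigmaL l θ) * (u' (sigmaL l θ) * (Qf l θ)⁻¹))
        * (Qd l θ / 2)
      = - ∫ t in Icc (0:ℝ) (2 * π), Qdd l t / 2 * u (sigmaL l t) ^ 2 := by
    rw [hibp2, hsplit2, hQddint]
    ring
  have hBCval : (∫ θ in Icc (0:ℝ) (2 * π), (2 * u (sigmaL l θ) * (u' (sigmaL l θ) * (Qf l θ)⁻¹))
        * (Qd l θ / 2))
      + (∫ θ in Icc (0:ℝ) (2 * π), u (sigmaL l θ) ^ 2 * (Qd l θ ^ 2 / (4 * Qf l θ) - Qf l θ))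
      = - ∫ x in Icc (0:ℝ) (2 * π), u x ^ 2 := by
    rw [hBval]
    have h1 : (∫ θ in Icc (0:ℝ) (2 * π), u (sigmaL l θ) ^ 2 * (Qd l θ ^ 2 / (4 * Qf l θ) - Qf l θ))
        - (∫ t in Icc (0:ℝ) (2 * π), Qdd l t / 2 * u (sigmaL l t) ^ 2)
        = ∫ θ in Icc (0:ℝ) (2 * π), u (sigmaL l θ) ^ 2 * -(Qf l θ)⁻¹ := by
      rw [← MeasureTheory.integral_sub hC hQddv]
      apply setIntegral_congr_fun measurableSet_Icc
      intro θ _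
      dsimp only
      have hp2 := point2 hl θ
      have : Qd l θ ^ 2 / (4 * Qf l θ) - Qf l θ - Qdd l θ / 2 = -(Qf l θ)⁻¹ := hp2
      nlinarith [this]
    have h2 : ∫ θ in Icc (0:ℝ) (2 * π), u (sigmaL l θ) ^ 2 * -(Qf l θ)⁻¹
        = - ∫ θ in Icc (0:ℝ) (2 * π), u (sigmaL l θ) ^ 2 * (Qf l θ)⁻¹ := by
      rw [← MeasureTheory.integral_neg]
      apply setIntegral_congr_fun measurableSet_Icc
      intro θ _
      ring
    have h3 : ∫ θ in Icc (0:ℝ) (2 * π), u (sigmaL l θ) ^ 2 * (Qf l θ)⁻¹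
        = ∫ x in Icc (0:ℝ) (2 * π), u x ^ 2 := by
      have h4 := subst_icc hl (fun x => u x ^ 2) hT
      rw [hσT] at h4
      simpa using h4
    linarith [h1, h2, h3]
  constructor
  · rw [ii_eq_icc hT, ii_eq_icc hT]
    rw [setIntegral_congr_fun measurableSet_Icc (fun θ _ => hpt1 θ)]
    have hAB : IntegrableOn (fun θ => u' (sigmaL l θ) ^ 2 * (Qf l θ)⁻¹
        + (2 * u (sigmaL l θ) * (u' (sigmaL l θ) * (Qf l θ)⁻¹)) * (Qd l θ / 2)) (Icc 0 (2 * π)) := by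
      have h5 := hA.add hB
      exact h5
    rw [MeasureTheory.integral_add hAB hC, MeasureTheory.integral_add hA hB]
    have hrhs : ∫ θ in Icc (0:ℝ) (2 * π), (u' θ ^ 2 - u θ ^ 2)
        = (∫ θ in Icc (0:ℝ) (2 * π), u' θ ^ 2) - ∫ θ in Icc (0:ℝ) (2 * π), u θ ^ 2 :=
      MeasureTheory.integral_sub hu'L2.integrable_sq huL2.integrable_sq
    rw [hrhs]
    linarith [hAval, hBCval]
  · rw [ii_eq_icc hT, ii_eq_icc hT]
    have hpt2 : ∀ θ ∈ Icc (0:ℝ) (2 * π), TL l u θ ^ (-2 : ℤ)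
        = u (sigmaL l θ) ^ (-2 : ℤ) * (Qf l θ)⁻¹ := by
      intro θ _
      unfold TL
      rw [mul_zpow, psiL_zpow_neg_two hl]
    rw [setIntegral_congr_fun measurableSet_Icc hpt2]
    have h3 : ∫ θ in Icc (0:ℝ) (2 * π), u (sigmaL l θ) ^ (-2 : ℤ) * (Qf l θ)⁻¹
        = ∫ x in Icc (0:ℝ) (2 * π), u x ^ (-2 : ℤ) := by
      have h4 := subst_icc hl (fun x => u x ^ (-2 : ℤ)) hT
      rw [hσT] at h4
      simpa using h4
    exact h3
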